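/- arXiv:2410.01068 — 3 statements merged into one kernel-verified Lean document; each statement's English description precedes it below -/
import Mathlib

section
/- Let $\phi : \mathbb{R}^d \to \mathbb{R}^d$ be $(L,\lambda)$-Hölder continuous with $L \geq 0$, $\lambda \in (0,1]$, and let $\mu, \nu$ be probability measures on $\mathbb{R}^d$. Then $W_\infty((I+\phi)_\sharp \mu, (I+\phi)_\sharp \nu) \leq W_\infty(\mu,\nu) + L \cdot W_\infty(\mu,\nu)^{\lambda}$, where $I$ is the identity map. -/
open MeasureTheory ENNReal

/-- The infinite Wasserstein distance between probability measures on `ℝ^d`: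
the infimum over couplings of the essential supremum of the distance. -/
noncomputable def Winf {d : ℕ} (μ ν : Measure (EuclideanSpace ℝ (Fin d))) : ℝ≥0∞ :=
  ⨅ γ ∈ {γ : Measure (EuclideanSpace ℝ (Fin d) × EuclideanSpace ℝ (Fin d)) |
      γ.map Prod.fst = μ ∧ γ.map Prod.snd = ν},
    essSup (fun p => edist p.1 p.2) γ

/-!
Push a coupling `γ` of `μ, ν` forward along `T × T`, where `T = I + φ`: this couples the two
image measures, and on it the distance is at most `f (‖x - y‖)` with `f t = t + L t^λ`. Since `f`
is monotone, `essSup (f ∘ dist) ≤ f (essSup dist)`, and since `f` is moreover continuous it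
commutes with the infimum over couplings.
-/

lemma holderWith_of_norm_sub_le {E F : Type*} [SeminormedAddCommGroup E]
    [SeminormedAddCommGroup F] {φ : E → F} {L lam : ℝ} (hL : 0 ≤ L) (hlam : 0 ≤ lam)
    (hφ : ∀ x y, ‖φ x - φ y‖ ≤ L * ‖x - y‖ ^ lam) :
    HolderWith L.toNNReal lam.toNNReal φ := by
  intro x y
  rw [edist_dist, dist_eq_norm, edist_dist, dist_eq_norm, Real.coe_toNNReal _ hlam,
    ENNReal.ofReal_rpow_of_nonneg (norm_nonneg _) hlam, ← ENNReal.ofReal.eq_def,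
    ← ENNReal.ofReal_mul hL]
  exact ENNReal.ofReal_le_ofReal (hφ x y)

lemma HolderWith.edist_add_self_le {E : Type*} [SeminormedAddCommGroup E] {C r : NNReal}
    {φ : E → E} (hφ : HolderWith C r φ) (x y : E) :
    edist (x + φ x) (y + φ y) ≤ edist x y + C * edist x y ^ (r : ℝ) :=
  (edist_add_add_le _ _ _ _).trans (add_le_add_right (hφ.edist_le x y) _)

namespace ENNReal

lemma monotone_add_mul_rpow (C : ℝ≥0∞) {r : ℝ} (hr : 0 ≤ r) :
    Monotone fun t : ℝ≥0∞ => t + C * t ^ r :=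
  fun _ _ hst => add_le_add hst (mul_le_mul_right (ENNReal.rpow_le_rpow hst hr) C)

lemma continuous_add_mul_rpow {C : ℝ≥0∞} (hC : C ≠ ⊤) (r : ℝ) :
    Continuous fun t : ℝ≥0∞ => t + C * t ^ r :=
  continuous_id.add ((ENNReal.continuous_const_mul hC).comp ENNReal.continuous_rpow_const)

lemma essSup_comp_le_of_monotone {α : Type*} [MeasurableSpace α] {μ : Measure α}
    {f : ℝ≥0∞ → ℝ≥0∞} (hf : Monotone f) (g : α → ℝ≥0∞) :
    essSup (fun a => f (g a)) μ ≤ f (essSup g μ) :=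
  essSup_le_of_ae_le _ ((ENNReal.ae_le_essSup g).mono fun _ h => hf h)

end ENNReal

section Winf

variable {d : ℕ} {μ ν : Measure (EuclideanSpace ℝ (Fin d))}
  {γ : Measure (EuclideanSpace ℝ (Fin d) × EuclideanSpace ℝ (Fin d))}

lemma winf_le_essSup (hγ₁ : γ.map Prod.fst = μ) (hγ₂ : γ.map Prod.snd = ν) :
    Winf μ ν ≤ essSup (fun p => edist p.1 p.2) γ :=
  iInf₂_le γ ⟨hγ₁, hγ₂⟩

lemma winf_map_le_essSup {T : EuclideanSpace ℝ (Fin d) → EuclideanSpace ℝ (Fin d)}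
    (hT : Measurable T) (hγ₁ : γ.map Prod.fst = μ) (hγ₂ : γ.map Prod.snd = ν) :
    Winf (μ.map T) (ν.map T) ≤ essSup (fun p => edist (T p.1) (T p.2)) γ := by
  have hTT : Measurable (Prod.map T T) := hT.prodMap hT
  have hfst : (γ.map (Prod.map T T)).map Prod.fst = μ.map T := by
    rw [Measure.map_map measurable_fst hTT, ← hγ₁, Measure.map_map hT measurable_fst]; rfl
  have hsnd : (γ.map (Prod.map T T)).map Prod.snd = ν.map T := by
    rw [Measure.map_map measurable_snd hTT, ← hγ₂, Measure.map_map hT measurable_snd]; rfl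
  calc Winf (μ.map T) (ν.map T)
      ≤ essSup (fun p => edist p.1 p.2) (γ.map (Prod.map T T)) := winf_le_essSup hfst hsnd
    _ = essSup (fun p => edist (T p.1) (T p.2)) γ :=
      essSup_map_measure (by fun_prop) hTT.aemeasurable

lemma winf_map_le_of_edist_le {T : EuclideanSpace ℝ (Fin d) → EuclideanSpace ℝ (Fin d)}
    (hT : Measurable T) {f : ℝ≥0∞ → ℝ≥0∞} (hf_mono : Monotone f) (hf_cont : Continuous f)
    (hf_top : f ⊤ = ⊤) (hTf : ∀ x y, edist (T x) (T y) ≤ f (edist x y)) :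
    Winf (μ.map T) (ν.map T) ≤ f (Winf μ ν) := by
  conv_rhs => unfold Winf
  rw [hf_mono.map_iInf_of_continuousAt hf_cont.continuousAt hf_top]
  refine le_iInf fun γ => ?_
  rw [Function.comp_apply, hf_mono.map_iInf_of_continuousAt hf_cont.continuousAt hf_top]
  refine le_iInf fun ⟨hγ₁, hγ₂⟩ => ?_
  rw [Function.comp_apply]
  calc Winf (μ.map T) (ν.map T)
      ≤ essSup (fun p => edist (T p.1) (T p.2)) γ := winf_map_le_essSup hT hγ₁ hγ₂
    _ ≤ essSup (fun p => f (edist p.1 p.2)) γ :=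
      essSup_mono_ae (.of_forall fun p => hTf p.1 p.2)
    _ ≤ f (essSup (fun p => edist p.1 p.2) γ) :=
      ENNReal.essSup_comp_le_of_monotone (μ := γ) hf_mono (fun p => edist p.1 p.2)

end Winf

theorem winf_holder_pushforward_general {d : ℕ}
    (φ : EuclideanSpace ℝ (Fin d) → EuclideanSpace ℝ (Fin d)) (L lam : ℝ)
    (hL : 0 ≤ L) (hlam0 : 0 < lam)
    (hφ : ∀ x y, ‖φ x - φ y‖ ≤ L * ‖x - y‖ ^ lam)
    (μ ν : Measure (EuclideanSpace ℝ (Fin d))) :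
    Winf (μ.map (fun x => x + φ x)) (ν.map (fun x => x + φ x)) ≤
      Winf μ ν + ENNReal.ofReal L * Winf μ ν ^ lam := by
  have hφH := holderWith_of_norm_sub_le hL hlam0.le hφ
  have hT : Measurable fun x => x + φ x :=
    measurable_id.add (hφH.continuous (by simpa using hlam0)).measurable
  refine winf_map_le_of_edist_le hT (ENNReal.monotone_add_mul_rpow _ hlam0.le)
    (ENNReal.continuous_add_mul_rpow ENNReal.ofReal_ne_top lam) (by simp) fun x y => ?_
  simpa [Real.coe_toNNReal _ hlam0.le, ENNReal.ofReal] using hφH.edist_add_self_le x y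

/-- If `φ` is `(L,λ)`-Hölder continuous, then
`W∞((I+φ)♯μ, (I+φ)♯ν) ≤ W∞(μ,ν) + L · W∞(μ,ν)^λ`. -/
theorem winf_holder_pushforward {d : ℕ}
    (φ : EuclideanSpace ℝ (Fin d) → EuclideanSpace ℝ (Fin d)) (L lam : ℝ)
    (hL : 0 ≤ L) (hlam0 : 0 < lam) (hlam1 : lam ≤ 1)
    (hφ : ∀ x y, ‖φ x - φ y‖ ≤ L * ‖x - y‖ ^ lam)
    (μ ν : Measure (EuclideanSpace ℝ (Fin d)))
    [IsProbabilityMeasure μ] [IsProbabilityMeasure ν] :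
    Winf (μ.map (fun x => x + φ x)) (ν.map (fun x => x + φ x)) ≤
      Winf μ ν + ENNReal.ofReal L * Winf μ ν ^ lam :=
  winf_holder_pushforward_general φ L lam hL hlam0 hφ μ ν
end

section
/- Let $\mu_1,\ldots,\mu_m$ and $\nu_1,\ldots,\nu_m$ be probability measures on $\mathbb{R}^d$, $\alpha > 1$, and $p_1,\ldots,p_m \geq 0$ with $\sum_i p_i = 1$. Then $\exp\big((\alpha-1) D_\alpha\big(\sum_i p_i \mu_i \,\|\, \sum_i p_i \nu_i\big)\big) \leq \sum_i p_i \exp\big((\alpha-1) D_\alpha(\mu_i \| \nu_i)\big)$. -/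
open MeasureTheory ENNReal Classical

/-- Rényi divergence of order `α > 1` between measures on `ℝ^d`:
`(α-1)⁻¹ log ∫ (dμ/dν)^α dν` if `μ ≪ ν`, and `∞` otherwise. -/

noncomputable def renyiDiv {d : ℕ} (α : ℝ) (μ ν : Measure (EuclideanSpace ℝ (Fin d))) : EReal :=
  if μ ≪ ν then (((α - 1)⁻¹ : ℝ) : EReal) * ENNReal.log (∫⁻ x, μ.rnDeriv ν x ^ α ∂ν) else ⊤

/-!
`exp ((α - 1) D_α(μ‖ν))` is the Hellinger integral `H_α(μ, ν) = ∫ (dμ/dν)^α dν` (`∞` unless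
`μ ≪ ν`). Against any measure `ρ` dominating both `μ` and `ν` it reads
`H_α(μ, ν) = ∫ f^α g^(1-α) dρ` with `f = dμ/dρ`, `g = dν/dρ`: where `g = 0 < f` the integrand
is infinite, which recovers the value `∞` when `μ` is not absolutely continuous w.r.t. `ν`.
By Hölder's inequality `(a, b) ↦ a^α b^(1-α)` is subadditive on `[0, ∞]²`, so taking
`ρ = ∑ μᵢ + ∑ νᵢ` shows that `H_α` is jointly subadditive; it is also positively homogeneous,
hence jointly convex.
-/

open Finset Measure
open scoped NNReal

namespace ENNReal

theorem rpow_sum_mul_rpow_sum_le {ι : Type*} {α : ℝ} (hα : 1 < α) (s : Finset ι)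
    (a b : ι → ℝ≥0∞) :
    (∑ i ∈ s, a i) ^ α * (∑ i ∈ s, b i) ^ (1 - α) ≤ ∑ i ∈ s, a i ^ α * b i ^ (1 - α) := by
  have hα₀ : 0 < α := by linarith
  have h1α : 1 - α < 0 := by linarith
  by_cases! hsupp : ∃ i ∈ s, b i = 0 ∧ a i ≠ 0
  · obtain ⟨i, hi, hb, ha⟩ := hsupp
    have hterm : a i ^ α * b i ^ (1 - α) = ∞ := by
      rw [hb, zero_rpow_of_neg h1α, mul_top (rpow_pos_of_nonneg (pos_iff_ne_zero.2 ha) hα₀.le).ne']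
    have hsum : ∑ j ∈ s, a j ^ α * b j ^ (1 - α) = ∞ := sum_eq_top.2 ⟨i, hi, hterm⟩
    rw [hsum]
    exact le_top
  rcases eq_or_ne (∑ i ∈ s, b i) 0 with hB₀ | hB₀
  · have hA : ∑ i ∈ s, a i = 0 :=
      sum_eq_zero fun i hi => hsupp i hi (sum_eq_zero_iff.1 hB₀ i hi)
    simp [hA, zero_rpow_of_pos hα₀]
  rcases eq_or_ne (∑ i ∈ s, b i) ∞ with hB | hB
  · simp [hB, top_rpow_of_neg h1α]
  have hb : ∀ i ∈ s, b i ≠ ∞ := sum_ne_top.1 hB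
  -- weighted Hölder with weights `b i` applied to the ratios `a i / b i`
  have holder := inner_le_weight_mul_Lp_of_nonneg s hα.le b fun i => a i / b i
  have hcancel : ∀ i ∈ s, b i * (a i / b i) = a i := fun i hi =>
    ENNReal.mul_div_cancel' (hsupp i hi) fun h => absurd h (hb i hi)
  have hpow : ∀ i ∈ s, b i * (a i / b i) ^ α = a i ^ α * b i ^ (1 - α) := by
    intro i hi
    rcases eq_or_ne (b i) 0 with hb₀ | hb₀
    · simp [hb₀, hsupp i hi hb₀, zero_rpow_of_pos hα₀]
    · rw [div_rpow_of_nonneg _ _ hα₀.le, rpow_sub _ _ hb₀ (hb i hi), rpow_one]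
      simp only [div_eq_mul_inv]
      ring
  rw [sum_congr rfl hcancel, sum_congr rfl hpow] at holder
  calc (∑ i ∈ s, a i) ^ α * (∑ i ∈ s, b i) ^ (1 - α)
      ≤ ((∑ i ∈ s, b i) ^ (1 - α⁻¹) * (∑ i ∈ s, a i ^ α * b i ^ (1 - α)) ^ α⁻¹) ^ α
          * (∑ i ∈ s, b i) ^ (1 - α) := by gcongr
    _ = ∑ i ∈ s, a i ^ α * b i ^ (1 - α) := by
      rw [mul_rpow_of_nonneg _ _ hα₀.le, ← rpow_mul, ← rpow_mul, inv_mul_cancel₀ hα₀.ne',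
        rpow_one, mul_right_comm, ← rpow_add _ _ hB₀ hB]
      simp [show (1 - α⁻¹) * α + (1 - α) = 0 by field_simp; ring]

end ENNReal

namespace MeasureTheory

variable {X : Type*} [MeasurableSpace X] {α : ℝ} {μ ν ρ : Measure X}

noncomputable def hellingerIntegral (α : ℝ) (μ ν : Measure X) : ℝ≥0∞ :=
  if μ ≪ ν then ∫⁻ x, μ.rnDeriv ν x ^ α ∂ν else ∞

theorem exp_mul_renyiDiv {d : ℕ} (hα : 1 < α) (μ ν : Measure (EuclideanSpace ℝ (Fin d))) :
    EReal.exp (((α - 1 : ℝ) : EReal) * renyiDiv α μ ν) = hellingerIntegral α μ ν := by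
  unfold renyiDiv hellingerIntegral
  split_ifs
  · rw [← mul_assoc, ← EReal.coe_mul, mul_inv_cancel₀ (sub_ne_zero.2 hα.ne'), EReal.coe_one,
      one_mul, exp_log]
  · rw [EReal.mul_top_of_pos (by exact_mod_cast sub_pos.2 hα), EReal.exp_top]

theorem withDensity_absolutelyContinuous_withDensity {f g : X → ℝ≥0∞} (hf : AEMeasurable f ρ)
    (hg : AEMeasurable g ρ) (hfg : ∀ᵐ x ∂ρ, g x = 0 → f x = 0) :
    ρ.withDensity f ≪ ρ.withDensity g := by
  refine AbsolutelyContinuous.mk fun s _ hs => ?_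
  rw [withDensity_apply_eq_zero' hg] at hs
  rw [withDensity_apply_eq_zero' hf]
  refine measure_mono_null_ae ?_ hs
  filter_upwards [hfg] with x hx hxs
  exact ⟨mt hx hxs.1, hxs.2⟩

theorem lintegral_rnDeriv_rpow_eq_lintegral_rnDeriv_mul [SigmaFinite μ] [SigmaFinite ν]
    [SigmaFinite ρ] (hα : 0 < α) (hμν : μ ≪ ν) (hνρ : ν ≪ ρ) :
    ∫⁻ x, μ.rnDeriv ν x ^ α ∂ν = ∫⁻ x, μ.rnDeriv ρ x ^ α * ν.rnDeriv ρ x ^ (1 - α) ∂ρ := by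
  nth_rewrite 1 [← withDensity_rnDeriv_eq ν ρ hνρ]
  rw [lintegral_withDensity_eq_lintegral_mul _ (ν.measurable_rnDeriv ρ)
    ((measurable_rnDeriv μ ν).pow_const α)]
  refine lintegral_congr_ae ?_
  filter_upwards [rnDeriv_mul_rnDeriv hμν (κ := ρ), ν.rnDeriv_lt_top ρ] with x hchain hlt
  rw [← hchain, Pi.mul_apply, Pi.mul_apply]
  rcases eq_or_ne (ν.rnDeriv ρ x) 0 with h₀ | h₀
  · simp [h₀, zero_rpow_of_pos hα]
  · rw [mul_rpow_of_nonneg _ _ hα.le, mul_assoc, ← rpow_add _ _ h₀ hlt.ne, add_sub_cancel,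
      rpow_one, mul_comm]

theorem absolutelyContinuous_of_lintegral_rnDeriv_mul_ne_top [μ.HaveLebesgueDecomposition ρ]
    [ν.HaveLebesgueDecomposition ρ] (hα : 1 < α) (hμρ : μ ≪ ρ) (hνρ : ν ≪ ρ)
    (hfin : ∫⁻ x, μ.rnDeriv ρ x ^ α * ν.rnDeriv ρ x ^ (1 - α) ∂ρ ≠ ∞) : μ ≪ ν := by
  have hmeas : Measurable fun x => μ.rnDeriv ρ x ^ α * ν.rnDeriv ρ x ^ (1 - α) :=
    ((μ.measurable_rnDeriv ρ).pow_const α).mul ((ν.measurable_rnDeriv ρ).pow_const (1 - α))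
  have hsupp : ∀ᵐ x ∂ρ, ν.rnDeriv ρ x = 0 → μ.rnDeriv ρ x = 0 := by
    filter_upwards [ae_lt_top hmeas hfin] with x hx hg
    by_contra hf
    have hpos : μ.rnDeriv ρ x ^ α ≠ 0 :=
      (rpow_pos_of_nonneg (pos_iff_ne_zero.2 hf) (by linarith)).ne'
    rw [hg, zero_rpow_of_neg (by linarith), mul_top hpos] at hx
    exact lt_irrefl _ hx
  rw [← withDensity_rnDeriv_eq μ ρ hμρ, ← withDensity_rnDeriv_eq ν ρ hνρ]
  exact withDensity_absolutelyContinuous_withDensity (μ.measurable_rnDeriv ρ).aemeasurable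
    (ν.measurable_rnDeriv ρ).aemeasurable hsupp

theorem hellingerIntegral_eq_lintegral_rnDeriv_mul [SigmaFinite μ] [SigmaFinite ν]
    [SigmaFinite ρ] (hα : 1 < α) (hμρ : μ ≪ ρ) (hνρ : ν ≪ ρ) :
    hellingerIntegral α μ ν = ∫⁻ x, μ.rnDeriv ρ x ^ α * ν.rnDeriv ρ x ^ (1 - α) ∂ρ := by
  unfold hellingerIntegral
  split_ifs with hμν
  · exact lintegral_rnDeriv_rpow_eq_lintegral_rnDeriv_mul (by linarith) hμν hνρ
  · by_contra hfin
    exact hμν (absolutelyContinuous_of_lintegral_rnDeriv_mul_ne_top hα hμρ hνρ (Ne.symm hfin))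

theorem rnDeriv_finsetSum {ι : Type*} (s : Finset ι) (μ : ι → Measure X) (ρ : Measure X)
    [∀ i, IsFiniteMeasure (μ i)] [SigmaFinite ρ] :
    (∑ i ∈ s, μ i).rnDeriv ρ =ᵐ[ρ] ∑ i ∈ s, (μ i).rnDeriv ρ := by
  induction s using Finset.induction_on with
  | empty => simp
  | insert i s hi ih =>
    rw [sum_insert hi, sum_insert hi]
    filter_upwards [rnDeriv_add' (μ i) (∑ j ∈ s, μ j) ρ, ih] with x hadd hsum
    rw [hadd, Pi.add_apply, Pi.add_apply, hsum]

theorem hellingerIntegral_finsetSum_le {ι : Type*} (hα : 1 < α) (s : Finset ι)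
    (μ ν : ι → Measure X) [∀ i, IsFiniteMeasure (μ i)] [∀ i, IsFiniteMeasure (ν i)] :
    hellingerIntegral α (∑ i ∈ s, μ i) (∑ i ∈ s, ν i) ≤
      ∑ i ∈ s, hellingerIntegral α (μ i) (ν i) := by
  set ρ := ∑ i ∈ s, μ i + ∑ i ∈ s, ν i
  have hμρ : ∀ i ∈ s, μ i ≪ ρ := fun i hi =>
    (absolutelyContinuous_of_le (single_le_sum (fun j _ => Measure.zero_le (μ j)) hi)).add_right _
  have hνρ : ∀ i ∈ s, ν i ≪ ρ := fun i hi =>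
    (absolutelyContinuous_of_le (single_le_sum (fun j _ => Measure.zero_le (ν j)) hi)).add_right' _
  rw [hellingerIntegral_eq_lintegral_rnDeriv_mul hα (AbsolutelyContinuous.rfl.add_right _)
    (AbsolutelyContinuous.rfl.add_right' _)]
  calc ∫⁻ x, (∑ i ∈ s, μ i).rnDeriv ρ x ^ α * (∑ i ∈ s, ν i).rnDeriv ρ x ^ (1 - α) ∂ρ
      = ∫⁻ x, (∑ i ∈ s, (μ i).rnDeriv ρ x) ^ α * (∑ i ∈ s, (ν i).rnDeriv ρ x) ^ (1 - α) ∂ρ := by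
        refine lintegral_congr_ae ?_
        filter_upwards [rnDeriv_finsetSum s μ ρ, rnDeriv_finsetSum s ν ρ] with x hμ hν
        rw [hμ, hν, Finset.sum_apply, Finset.sum_apply]
    _ ≤ ∫⁻ x, ∑ i ∈ s, (μ i).rnDeriv ρ x ^ α * (ν i).rnDeriv ρ x ^ (1 - α) ∂ρ :=
        lintegral_mono fun x => rpow_sum_mul_rpow_sum_le hα s _ _
    _ = ∑ i ∈ s, ∫⁻ x, (μ i).rnDeriv ρ x ^ α * (ν i).rnDeriv ρ x ^ (1 - α) ∂ρ :=
        lintegral_finsetSum _ fun i _ => (((μ i).measurable_rnDeriv ρ).pow_const α).mul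
          (((ν i).measurable_rnDeriv ρ).pow_const (1 - α))
    _ = ∑ i ∈ s, hellingerIntegral α (μ i) (ν i) := sum_congr rfl fun i hi =>
        (hellingerIntegral_eq_lintegral_rnDeriv_mul hα (hμρ i hi) (hνρ i hi)).symm

theorem hellingerIntegral_smul [IsFiniteMeasure μ] [SigmaFinite ν] (r : ℝ≥0) :
    hellingerIntegral α (r • μ) (r • ν) = r * hellingerIntegral α μ ν := by
  rcases eq_or_ne r 0 with rfl | hr
  · simp [hellingerIntegral]
  have hr' : (r : ℝ≥0∞) ≠ 0 := coe_ne_zero.2 hr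
  have hac : r • μ ≪ r • ν ↔ μ ≪ ν :=
    ⟨fun h => (absolutelyContinuous_smul hr').trans (h.trans smul_absolutelyContinuous),
      fun h => h.smul_left r |>.trans (absolutelyContinuous_smul hr')⟩
  unfold hellingerIntegral
  by_cases hμν : μ ≪ ν
  · rw [if_pos (hac.2 hμν), if_pos hμν, lintegral_smul_measure]
    congr 1
    refine lintegral_congr_ae ?_
    filter_upwards [rnDeriv_smul_same μ ν hr] with x hx using by rw [hx]
  · rw [if_neg (mt hac.1 hμν), if_neg hμν, mul_top hr']

end MeasureTheory

theorem renyi_joint_quasi_convexity_general {d m : ℕ} (α : ℝ) (hα : 1 < α)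
    (μ ν : Fin m → Measure (EuclideanSpace ℝ (Fin d)))
    [∀ i, IsProbabilityMeasure (μ i)] [∀ i, IsProbabilityMeasure (ν i)]
    (p : Fin m → ℝ) :
    EReal.exp (((α - 1 : ℝ) : EReal) *
        renyiDiv α (∑ i, ENNReal.ofReal (p i) • μ i) (∑ i, ENNReal.ofReal (p i) • ν i)) ≤
      ∑ i, ENNReal.ofReal (p i) *
        EReal.exp (((α - 1 : ℝ) : EReal) * renyiDiv α (μ i) (ν i)) := by
  have hsmul : ∀ (μ : Measure (EuclideanSpace ℝ (Fin d))) i,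
      ENNReal.ofReal (p i) • μ = (p i).toNNReal • μ := fun _ _ => rfl
  simp_rw [exp_mul_renyiDiv hα, hsmul]
  exact (hellingerIntegral_finsetSum_le hα univ _ _).trans_eq
    (Finset.sum_congr rfl fun i _ => hellingerIntegral_smul (p i).toNNReal)

/-- Joint quasi-convexity of `exp((α-1) D_α)` in both arguments (Lemma 4.1 of
Ye and Shokri): for mixtures with weights `p_i`,
`exp((α-1) D_α(∑ pᵢμᵢ ‖ ∑ pᵢνᵢ)) ≤ ∑ pᵢ exp((α-1) D_α(μᵢ‖νᵢ))`. -/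
theorem renyi_joint_quasi_convexity {d m : ℕ} (α : ℝ) (hα : 1 < α)
    (μ ν : Fin m → Measure (EuclideanSpace ℝ (Fin d)))
    [∀ i, IsProbabilityMeasure (μ i)] [∀ i, IsProbabilityMeasure (ν i)]
    (p : Fin m → ℝ) (hp : ∀ i, 0 ≤ p i) (hp1 : ∑ i, p i = 1) :
    EReal.exp (((α - 1 : ℝ) : EReal) *
        renyiDiv α (∑ i, ENNReal.ofReal (p i) • μ i) (∑ i, ENNReal.ofReal (p i) • ν i)) ≤
      ∑ i, ENNReal.ofReal (p i) *
        EReal.exp (((α - 1 : ℝ) : EReal) * renyiDiv α (μ i) (ν i)) :=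
  renyi_joint_quasi_convexity_general α hα μ ν p
end

section
/- For $\alpha > 1$, $\sigma > 0$, and means $m_1, m_2 \in \mathbb{R}^d$, the Rényi divergence between two Gaussians with the same covariance satisfies $D_\alpha(N(m_1, \sigma^2 I) \,\|\, N(m_2, \sigma^2 I)) = \frac{\alpha \|m_1 - m_2\|^2}{2\sigma^2}$. -/
open MeasureTheory ENNReal Classical

/-- The `d`-dimensional Gaussian measure with mean `m` and covariance `σ² I`. -/
noncomputable def gaussianMeasure {d : ℕ} (m : EuclideanSpace ℝ (Fin d)) (σ : ℝ) :
    Measure (EuclideanSpace ℝ (Fin d)) :=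
  volume.withDensity fun x =>
    ENNReal.ofReal ((2 * Real.pi * σ ^ 2) ^ (-(d : ℝ) / 2) *
      Real.exp (-‖x - m‖ ^ 2 / (2 * σ ^ 2)))

section helpers
open Real

private lemma integrable_gauss' {d : ℕ} {b : ℝ} (hb : 0 < b) :
    Integrable (fun v : EuclideanSpace ℝ (Fin d) => rexp (-b * ‖v‖ ^ 2)) := by
  have h := (GaussianFourier.integrable_cexp_neg_mul_sq_norm_add (V := EuclideanSpace ℝ (Fin d))
    (b := (b : ℂ)) (by simpa using hb) 0 (0 : EuclideanSpace ℝ (Fin d))).re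
  refine h.congr (ae_of_all _ fun v => ?_)
  push_cast
  simp only [zero_mul, add_zero, ← Complex.ofReal_pow, ← Complex.ofReal_mul, ← Complex.ofReal_neg,
    Complex.exp_ofReal_re, neg_mul, RCLike.re_to_complex]

private lemma gauss_lintegral' {d : ℕ} {b : ℝ} (hb : 0 < b) (m : EuclideanSpace ℝ (Fin d)) :
    ∫⁻ x : EuclideanSpace ℝ (Fin d), ENNReal.ofReal (Real.exp (-b * ‖x - m‖ ^ 2)) =
      ENNReal.ofReal ((π / b) ^ ((d : ℝ) / 2)) := by
  have h1 : ∫⁻ x : EuclideanSpace ℝ (Fin d), ENNReal.ofReal (Real.exp (-b * ‖x - m‖ ^ 2)) =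
      ∫⁻ x : EuclideanSpace ℝ (Fin d), ENNReal.ofReal (Real.exp (-b * ‖x‖ ^ 2)) := by
    simp_rw [sub_eq_add_neg]
    exact lintegral_add_right_eq_self (fun x => ENNReal.ofReal (Real.exp (-b * ‖x‖ ^ 2))) (-m)
  rw [h1, ← ofReal_integral_eq_lintegral_ofReal (integrable_gauss' hb)
    (ae_of_all _ fun x => (Real.exp_pos _).le)]
  have h2 := GaussianFourier.integral_rexp_neg_mul_sq_norm (V := EuclideanSpace ℝ (Fin d)) hb
  rw [finrank_euclideanSpace_fin] at h2
  rw [h2]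

private lemma gauss_density_lintegral' {d : ℕ} {σ : ℝ} (hσ : 0 < σ)
    (m : EuclideanSpace ℝ (Fin d)) :
    ∫⁻ x : EuclideanSpace ℝ (Fin d), ENNReal.ofReal ((2 * π * σ ^ 2) ^ (-(d : ℝ) / 2) *
      Real.exp (-‖x - m‖ ^ 2 / (2 * σ ^ 2))) = 1 := by
  have hb : 0 < 1 / (2 * σ ^ 2) := by positivity
  have h2σ : (0:ℝ) < 2 * π * σ ^ 2 := by positivity
  have hC : (0:ℝ) ≤ (2 * π * σ ^ 2) ^ (-(d : ℝ) / 2) := (Real.rpow_pos_of_pos h2σ _).le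
  simp_rw [ENNReal.ofReal_mul hC]
  rw [lintegral_const_mul' _ _ ENNReal.ofReal_ne_top]
  have heq : ∀ x : EuclideanSpace ℝ (Fin d),
      -‖x - m‖ ^ 2 / (2 * σ ^ 2) = -(1 / (2 * σ ^ 2)) * ‖x - m‖ ^ 2 := by
    intro x; field_simp
  simp_rw [heq]
  rw [gauss_lintegral' hb m]
  have hπ : π / (1 / (2 * σ ^ 2)) = 2 * π * σ ^ 2 := by field_simp
  rw [hπ, ← ENNReal.ofReal_mul hC, ← Real.rpow_add h2σ,
    show (-(d:ℝ)/2 + (d:ℝ)/2) = 0 by ring, Real.rpow_zero, ENNReal.ofReal_one]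

private lemma key_identity {d : ℕ} (α : ℝ) (m₁ m₂ x : EuclideanSpace ℝ (Fin d)) :
    α * ‖x - m₁‖ ^ 2 + (1 - α) * ‖x - m₂‖ ^ 2 =
      ‖x - (m₂ + α • (m₁ - m₂))‖ ^ 2 + α * (1 - α) * ‖m₁ - m₂‖ ^ 2 := by
  have h1 : x - m₁ = (x - m₂) - (m₁ - m₂) := by abel
  have h2 : x - (m₂ + α • (m₁ - m₂)) = (x - m₂) - α • (m₁ - m₂) := by
    rw [sub_add_eq_sub_sub]
  rw [h1, h2]
  generalize x - m₂ = y
  generalize m₁ - m₂ = Δ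
  rw [norm_sub_sq_real, norm_sub_sq_real, real_inner_smul_right, norm_smul]
  simp only [Real.norm_eq_abs, mul_pow, sq_abs]
  ring

end helpers

/-- Rényi divergence between two Gaussians with the same covariance:
`D_α(N(m₁, σ²I) ‖ N(m₂, σ²I)) = α ‖m₁ - m₂‖² / (2σ²)`. -/
theorem renyiDiv_gaussian {d : ℕ} (α σ : ℝ) (hα : 1 < α) (hσ : 0 < σ)
    (m₁ m₂ : EuclideanSpace ℝ (Fin d)) :
    renyiDiv α (gaussianMeasure m₁ σ) (gaussianMeasure m₂ σ) =
      ((α * ‖m₁ - m₂‖ ^ 2 / (2 * σ ^ 2) : ℝ) : EReal) := by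
  have h2σ : (0:ℝ) < 2 * σ ^ 2 := by positivity
  set C : ℝ := (2 * Real.pi * σ ^ 2) ^ (-(d : ℝ) / 2) with hCdef
  have hCpos : 0 < C := Real.rpow_pos_of_pos (by positivity) _
  set g : EuclideanSpace ℝ (Fin d) → ℝ≥0∞ := fun x =>
    ENNReal.ofReal (Real.exp ((‖x - m₂‖ ^ 2 - ‖x - m₁‖ ^ 2) / (2 * σ ^ 2))) with hgdef
  have hf₂ : Measurable (fun x : EuclideanSpace ℝ (Fin d) =>
      ENNReal.ofReal (C * Real.exp (-‖x - m₂‖ ^ 2 / (2 * σ ^ 2)))) := by fun_prop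
  have hg : Measurable g := by fun_prop
  have hμν : gaussianMeasure m₁ σ = (gaussianMeasure m₂ σ).withDensity g := by
    rw [gaussianMeasure, gaussianMeasure, ← withDensity_mul _ hf₂ hg]
    congr 1
    funext x
    simp only [Pi.mul_apply, hgdef]
    rw [← ENNReal.ofReal_mul (by positivity)]
    rw [← hCdef, mul_assoc, ← Real.exp_add,
      show -‖x - m₁‖ ^ 2 / (2 * σ ^ 2) = -‖x - m₂‖ ^ 2 / (2 * σ ^ 2) +
        (‖x - m₂‖ ^ 2 - ‖x - m₁‖ ^ 2) / (2 * σ ^ 2) by ring]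
  haveI hprob : IsProbabilityMeasure (gaussianMeasure m₂ σ) := by
    constructor
    rw [gaussianMeasure, withDensity_apply _ MeasurableSet.univ, setLIntegral_univ,
      gauss_density_lintegral' hσ]
  have h_ac : gaussianMeasure m₁ σ ≪ gaussianMeasure m₂ σ := by
    rw [hμν]; exact withDensity_absolutelyContinuous _ _
  have h_rn : (gaussianMeasure m₁ σ).rnDeriv (gaussianMeasure m₂ σ)
      =ᵐ[gaussianMeasure m₂ σ] g := by
    rw [hμν]; exact Measure.rnDeriv_withDensity _ hg
  set K : ℝ := α * (α - 1) * ‖m₁ - m₂‖ ^ 2 / (2 * σ ^ 2) with hKdef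
  set m : EuclideanSpace ℝ (Fin d) := m₂ + α • (m₁ - m₂) with hmdef
  have hgα : Measurable (fun x => g x ^ α) := by fun_prop
  have hpt : ∀ x : EuclideanSpace ℝ (Fin d),
      (fun y => ENNReal.ofReal (C * Real.exp (-‖y - m₂‖ ^ 2 / (2 * σ ^ 2)))) x * g x ^ α =
      ENNReal.ofReal (Real.exp K) * ENNReal.ofReal (C * Real.exp (-‖x - m‖ ^ 2 / (2 * σ ^ 2))) := by
    intro x
    simp only [hgdef]
    rw [ENNReal.ofReal_rpow_of_pos (Real.exp_pos _), ← Real.exp_mul,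
      ← ENNReal.ofReal_mul (by positivity), ← ENNReal.ofReal_mul (Real.exp_pos K).le]
    congr 1
    rw [mul_assoc, ← Real.exp_add,
      show Real.exp K * (C * Real.exp (-‖x - m‖ ^ 2 / (2 * σ ^ 2)))
        = C * Real.exp (K + -‖x - m‖ ^ 2 / (2 * σ ^ 2)) by rw [Real.exp_add]; ring]
    have hk := key_identity α m₁ m₂ x
    rw [← hmdef] at hk
    congr 2
    rw [hKdef]
    linear_combination (-1 / (2 * σ ^ 2)) * hk
  have hint : ∫⁻ x, (gaussianMeasure m₁ σ).rnDeriv (gaussianMeasure m₂ σ) x ^ α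
      ∂(gaussianMeasure m₂ σ) = ENNReal.ofReal (Real.exp K) := by
    rw [lintegral_congr_ae (h_rn.mono fun x hx => by rw [hx])]
    rw [gaussianMeasure, lintegral_withDensity_eq_lintegral_mul _ hf₂ hgα]
    calc ∫⁻ x, ((fun y => ENNReal.ofReal (C * Real.exp (-‖y - m₂‖ ^ 2 / (2 * σ ^ 2)))) *
          fun x => g x ^ α) x
        = ∫⁻ x, ENNReal.ofReal (Real.exp K) *
            ENNReal.ofReal (C * Real.exp (-‖x - m‖ ^ 2 / (2 * σ ^ 2))) := by
          refine lintegral_congr fun x => ?_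
          simpa using hpt x
      _ = ENNReal.ofReal (Real.exp K) := by
          rw [lintegral_const_mul' _ _ ENNReal.ofReal_ne_top,
            gauss_density_lintegral' hσ m, mul_one]
  rw [renyiDiv, if_pos h_ac, hint, ENNReal.log_ofReal_of_pos (Real.exp_pos _), Real.log_exp,
    ← EReal.coe_mul]
  norm_cast
  rw [hKdef]
  have hα1 : α - 1 ≠ 0 := by linarith
  field_simp
end
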